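/- arXiv:1305.2321 — 5 statements merged into one kernel-verified Lean document; each statement's English description precedes it below -/
import Mathlib

section
/- Let L be an orthomodular lattice, let r ∈ L, and let p, q ≤ r. If p and q are perspective in the interval sublattice L[0,r] (i.e., have a common complement x in L[0,r]), then p and q are perspective in L (i.e., have a common complement in L). -/
universe u

/-- An orthomodular lattice: a bounded lattice with an orthocomplementation
satisfying the orthomodular law. -/
class OrthomodularLattice (L : Type u) extends Lattice L, BoundedOrder L where
  compl : L → L
  compl_compl : ∀ p : L, compl (compl p) = p
  compl_antitone : ∀ p q : L, p ≤ q → compl q ≤ compl p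
  sup_compl : ∀ p : L, p ⊔ compl p = ⊤
  inf_compl : ∀ p : L, p ⊓ compl p = ⊥
  orthomodular : ∀ p q : L, p ≤ q → q = p ⊔ (q ⊓ compl p)

namespace OrthomodularLattice

variable {L : Type u} [OrthomodularLattice L]

/-- `p` and `q` are perspective in the interval `L[0,r]`: they have a common
complement `x` in the bounded lattice `{y : L // y ≤ r}`. -/
def PerspectiveIn (r p q : L) : Prop :=
  ∃ x : L, x ≤ r ∧ p ⊔ x = r ∧ q ⊔ x = r ∧ p ⊓ x = ⊥ ∧ q ⊓ x = ⊥

/-- `p` and `q` are perspective in `L`: they have a common complement. -/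
def Perspective (p q : L) : Prop :=
  ∃ x : L, p ⊔ x = ⊤ ∧ q ⊔ x = ⊤ ∧ p ⊓ x = ⊥ ∧ q ⊓ x = ⊥

/-- `p` and `q` are strongly perspective: perspective in `L[0, p ⊔ q]`. -/
def StronglyPerspective (p q : L) : Prop :=
  PerspectiveIn (p ⊔ q) p q

end OrthomodularLattice

/-!
A common complement `x` of `p` and `q` in `L[0,r]` becomes a common complement `x ⊔ r⊥` in `L`.
Joins are clear since `p ⊔ x = r` and `r ⊔ r⊥ = 1`. For meets, the orthomodular law gives
`(x ⊔ r⊥) ⊓ r = x`, so an element `p ≤ r` meets `x ⊔ r⊥` exactly where it meets `x`.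
-/

namespace OrthomodularLattice

variable {L : Type u} [OrthomodularLattice L]

theorem le_compl_comm {a b : L} : a ≤ compl b ↔ b ≤ compl a := by
  constructor <;> intro h
  · simpa only [compl_compl] using compl_antitone _ _ h
  · simpa only [compl_compl] using compl_antitone _ _ h

theorem compl_sup (a b : L) : compl (a ⊔ b) = compl a ⊓ compl b := by
  refine le_antisymm
    (le_inf (compl_antitone _ _ le_sup_left) (compl_antitone _ _ le_sup_right)) ?_
  rw [le_compl_comm]
  exact sup_le (le_compl_comm.mp inf_le_left) (le_compl_comm.mp inf_le_right)

theorem sup_compl_inf_eq_of_le {x r : L} (hx : x ≤ r) : (x ⊔ compl r) ⊓ r = x := by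
  set w := (x ⊔ compl r) ⊓ r
  have hw : w = x ⊔ (w ⊓ compl x) := orthomodular x w (le_inf le_sup_left hx)
  have hbot : w ⊓ compl x = ⊥ := by
    refine le_bot_iff.mp ?_
    calc w ⊓ compl x ≤ (x ⊔ compl r) ⊓ compl (x ⊔ compl r) := by
          rw [compl_sup, compl_compl]
          exact le_inf (inf_le_left.trans inf_le_left)
            (le_inf inf_le_right (inf_le_left.trans inf_le_right))
      _ = ⊥ := inf_compl _
  rw [hw, hbot, sup_bot_eq]

theorem sup_sup_compl_eq_top {p x r : L} (h : p ⊔ x = r) : p ⊔ (x ⊔ compl r) = ⊤ := by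
  rw [← sup_assoc, h, sup_compl]

theorem inf_sup_compl_eq_bot {p x r : L} (hp : p ≤ r) (hx : x ≤ r) (h : p ⊓ x = ⊥) :
    p ⊓ (x ⊔ compl r) = ⊥ := by
  rwa [← inf_eq_left.mpr hp, inf_assoc, inf_comm r, sup_compl_inf_eq_of_le hx]

end OrthomodularLattice

open OrthomodularLattice in
theorem perspective_in_interval_implies_perspective
    {L : Type u} [OrthomodularLattice L] (r p q : L)
    (hp : p ≤ r) (hq : q ≤ r) (h : PerspectiveIn r p q) :
    Perspective p q := by
  obtain ⟨x, hxr, hpx, hqx, hpix, hqix⟩ := h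
  exact ⟨x ⊔ compl r, sup_sup_compl_eq_top hpx, sup_sup_compl_eq_top hqx,
    inf_sup_compl_eq_bot hp hxr hpix, inf_sup_compl_eq_bot hq hxr hqix⟩
end

section
/- Let A be a synaptic algebra, and let e₁, e₂, e₃, ... be an infinite orthogonal sequence of projections such that for each i, the projections e_i and e_{i+1} are exchanged by a symmetry s_i ∈ A. Then for all i, j, the projections e_i and e_j are exchanged by a symmetry in A. -/
universe u

/-- A (partial axiomatization of a) synaptic algebra: a partially ordered real
vector subspace `A` of an associative unital algebra `R`, closed under squaring
and quadratic maps, in which the projections form an orthomodular lattice with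
`p⊥ = 1 - p` and, for projections, `p ≤ q ↔ p * q = p ↔ q * p = p`. -/
structure Synaptic (R : Type u) [Ring R] [PartialOrder R] where
  A : Set R
  one_mem : (1 : R) ∈ A
  add_mem : ∀ {a b : R}, a ∈ A → b ∈ A → a + b ∈ A
  neg_mem : ∀ {a : R}, a ∈ A → -a ∈ A
  sq_mem : ∀ {a : R}, a ∈ A → a * a ∈ A
  quad_mem : ∀ {a b : R}, a ∈ A → b ∈ A → a * b * a ∈ A
  add_le_add_right : ∀ {a b : R}, a ≤ b → ∀ c : R, a + c ≤ b + c
  sq_nonneg' : ∀ {a : R}, a ∈ A → 0 ≤ a * a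
  quad_nonneg : ∀ {a b : R}, a ∈ A → b ∈ A → 0 ≤ b → 0 ≤ a * b * a
  zero_lt_one' : (0 : R) < 1
  /-- for projections, the order is characterized multiplicatively -/
  proj_le_iff : ∀ {p q : R}, p ∈ A → p * p = p → q ∈ A → q * q = q →
    (p ≤ q ↔ p * q = p ∧ q * p = p)

namespace Synaptic

variable {R : Type u} [Ring R] [PartialOrder R] (S : Synaptic R)

/-- `p` is a projection of `A`. -/
def IsProj (p : R) : Prop := p ∈ S.A ∧ p * p = p

/-- `s` is a symmetry of `A`. -/
def IsSym (s : R) : Prop := s ∈ S.A ∧ s * s = 1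

/-- `c` belongs to the center `C(A)` of `A`. -/
def Central (c : R) : Prop := c ∈ S.A ∧ ∀ a ∈ S.A, c * a = a * c

/-- `c` is a central projection. -/
def IsCentralProj (c : R) : Prop := S.IsProj c ∧ S.Central c

/-- Equivalence of projections: `p ∼ q` iff there is a finite chain of
projections from `p` to `q` in which consecutive members are exchanged by a
symmetry of `A`. -/
def Equiv (p q : R) : Prop :=
  ∃ n : ℕ, ∃ e : ℕ → R, e 0 = p ∧ e n = q ∧ (∀ i ≤ n, S.IsProj (e i)) ∧
    ∀ i < n, ∃ s : R, S.IsSym s ∧ s * e i * s = e (i + 1)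

/-- `p ⪯ q`: `p` is equivalent to a subprojection of `q`. -/
def SubEquiv (p q : R) : Prop := ∃ q₁ : R, S.IsProj q₁ ∧ q₁ ≤ q ∧ S.Equiv p q₁

/-- `p` is the supremum, in the projection lattice `P`, of the set `F` of
projections. -/
def IsSupProj (F : Set R) (p : R) : Prop :=
  S.IsProj p ∧ (∀ q ∈ F, q ≤ p) ∧ ∀ r : R, S.IsProj r → (∀ q ∈ F, q ≤ r) → p ≤ r

/-- `p` is the infimum, in the projection lattice `P`, of the set `F` of
projections. -/
def IsInfProj (F : Set R) (p : R) : Prop :=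
  S.IsProj p ∧ (∀ q ∈ F, p ≤ q) ∧ ∀ r : R, S.IsProj r → (∀ q ∈ F, r ≤ q) → r ≤ p

/-- `F` is a (pairwise) orthogonal set of projections. -/
def OrthSet (F : Set R) : Prop :=
  (∀ p ∈ F, S.IsProj p) ∧ ∀ p ∈ F, ∀ q ∈ F, p ≠ q → p * q = 0

/-- `F` is a centrally orthogonal set of projections: its members are dominated
by a pairwise orthogonal family of central projections. -/
def CentOrthSet (F : Set R) : Prop :=
  (∀ p ∈ F, S.IsProj p) ∧ ∃ c : R → R,
    (∀ p ∈ F, S.IsCentralProj (c p) ∧ p ≤ c p) ∧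
    ∀ p ∈ F, ∀ q ∈ F, p ≠ q → c p * c q = 0

/-- The projection lattice `P` is centrally orthocomplete. -/
def CentOrthocomplete : Prop :=
  ∀ F : Set R, S.CentOrthSet F → ∃ p : R, S.IsSupProj F p

/-- The projection lattice `P` is complete. -/
def CompleteP : Prop :=
  ∀ F : Set R, (∀ p ∈ F, S.IsProj p) → ∃ p : R, S.IsSupProj F p

/-- `c` is the central cover `γ a` of `a`: the smallest central projection `c`
with `a * c = a`. -/
def IsCentralCover (a c : R) : Prop :=
  S.IsCentralProj c ∧ a * c = a ∧
    ∀ d : R, S.IsCentralProj d → a * d = a → c ≤ d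

/-- `Q` is a type-determining (TD) set of projections: closed under suprema of
centrally orthogonal families and under meets (= products) with central
projections. -/
def TD (Q : Set R) : Prop :=
  (∀ q ∈ Q, S.IsProj q) ∧
  (∀ F : Set R, F ⊆ Q → S.CentOrthSet F → ∀ p : R, S.IsSupProj F p → p ∈ Q) ∧
  (∀ q ∈ Q, ∀ c : R, S.IsCentralProj c → q * c ∈ Q)

/-- `Q` is projective: closed under equivalence of projections. -/
def Projective (Q : Set R) : Prop :=
  ∀ p q : R, q ∈ Q → S.Equiv p q → p ∈ Q

/-- `Q` is downward closed (`Q↓ ⊆ Q`). -/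
def DownwardClosed (Q : Set R) : Prop :=
  ∀ q ∈ Q, ∀ p : R, S.IsProj p → p ≤ q → p ∈ Q

/-- The projection `p` is modular: the interval OML `P[0,p]` satisfies the
modular law (stated relationally via suprema and infima in `P`, which agree
with those computed in `P[0,p]`). -/
def ModularProj (p : R) : Prop :=
  S.IsProj p ∧ ∀ a b c : R, S.IsProj a → S.IsProj b → S.IsProj c →
    a ≤ p → b ≤ p → c ≤ p → a ≤ c →
    ∀ i s j m : R, S.IsInfProj {b, c} i → S.IsSupProj {a, i} s →
      S.IsSupProj {a, b} j → S.IsInfProj {j, c} m → s = m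

/-- `p` and `q` are perspective in the interval `P[0,r]`: they have a common
complement `x` there. -/
def PerspectiveIn (r p q : R) : Prop :=
  ∃ x : R, S.IsProj x ∧ x ≤ r ∧ S.IsSupProj {p, x} r ∧ S.IsSupProj {q, x} r ∧
    S.IsInfProj {p, x} 0 ∧ S.IsInfProj {q, x} 0

end Synaptic


private theorem sym_exchange_key {R : Type u} [Ring R] [PartialOrder R]
    (S : Synaptic R) {p q s t : R}
    (hp : S.IsProj p) (hs : S.IsSym s) (ht : S.IsSym t)
    (hpq : p * q = 0) (hqp : q * p = 0)
    (h : t * (s * p * s) * t = q) :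
    ∃ u : R, S.IsSym u ∧ u * p * u = q := by
  obtain ⟨hpA, hp2⟩ := hp
  obtain ⟨hsA, hs2⟩ := hs
  obtain ⟨htA, ht2⟩ := ht
  have hqA : q ∈ S.A := by
    rw [← h]; exact S.quad_mem htA (S.quad_mem hsA hpA)
  have ss : ∀ a : R, s * (s * a) = a := fun a => by rw [← mul_assoc, hs2, one_mul]
  have tt : ∀ a : R, t * (t * a) = a := fun a => by rw [← mul_assoc, ht2, one_mul]
  have pp : ∀ a : R, p * (p * a) = p * a := fun a => by rw [← mul_assoc, hp2]
  have hq_eq : q = t * (s * (p * (s * t))) := by rw [← h]; noncomm_ring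
  have ptspA : ∀ a : R, p * (t * (s * (p * a))) = 0 := by
    intro a
    have h1 : (p * q) * (t * (s * a)) = 0 := by rw [hpq, zero_mul]
    calc p * (t * (s * (p * a))) = (p * q) * (t * (s * a)) := by
          rw [hq_eq]; simp only [mul_assoc, ss, tt]
      _ = 0 := h1
  have pstpA : ∀ a : R, p * (s * (t * (p * a))) = 0 := by
    intro a
    have h1 : s * (t * ((q * p) * a)) = 0 := by rw [hqp, zero_mul, mul_zero, mul_zero]
    calc p * (s * (t * (p * a))) = s * (t * ((q * p) * a)) := by
          rw [hq_eq]; simp only [mul_assoc, ss, tt]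
      _ = 0 := h1
  have ptsp1 : p * (t * (s * p)) = 0 := by
    have := ptspA 1; rwa [mul_one] at this
  have pstp1 : p * (s * (t * p)) = 0 := by
    have := pstpA 1; rwa [mul_one] at this
  refine ⟨t * s * p + p * s * t + 1 - p - q, ⟨?_, ?_⟩, ?_⟩
  · -- membership in A
    have key : t * s * p + p * s * t =
        (t + p) * s * (t + p) + -(t * s * t) + -(p * s * p) := by noncomm_ring
    have h1 : t * s * p + p * s * t ∈ S.A := by
      rw [key]
      exact S.add_mem (S.add_mem (S.quad_mem (S.add_mem htA hpA) hsA)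
        (S.neg_mem (S.quad_mem htA hsA))) (S.neg_mem (S.quad_mem hpA hsA))
    have h2 : t * s * p + p * s * t + 1 - p - q =
        t * s * p + p * s * t + (1 + -p + -q) := by abel
    rw [h2]
    exact S.add_mem h1 (S.add_mem (S.add_mem S.one_mem (S.neg_mem hpA)) (S.neg_mem hqA))
  · -- sigma * sigma = 1
    rw [hq_eq]
    simp only [mul_add, add_mul, mul_sub, sub_mul, mul_one, one_mul, mul_assoc,
      ss, tt, pp, hp2, ptspA, pstpA, ptsp1, pstp1, mul_zero, zero_mul]
    abel
  · -- sigma * p * sigma = q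
    rw [hq_eq]
    simp only [mul_add, add_mul, mul_sub, sub_mul, mul_one, one_mul, mul_assoc,
      ss, tt, pp, hp2, ptspA, pstpA, ptsp1, pstp1, mul_zero, zero_mul]
    abel

/-- If `e₁, e₂, …` is an infinite orthogonal sequence of projections in which
consecutive projections are exchanged by symmetries, then any two members of
the sequence are exchanged by a symmetry of `A`. -/
theorem orthogonal_sequence_exchange {R : Type u} [Ring R] [PartialOrder R]
    (S : Synaptic R) (e : ℕ → R) (he : ∀ i, S.IsProj (e i))
    (horth : ∀ i j, i ≠ j → e i * e j = 0)
    (hexch : ∀ i, ∃ s : R, S.IsSym s ∧ s * e i * s = e (i + 1)) :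
    ∀ i j, ∃ s : R, S.IsSym s ∧ s * e i * s = e j := by
  have claim : ∀ d i : ℕ, ∃ s : R, S.IsSym s ∧ s * e i * s = e (i + d) := by
    intro d
    induction d with
    | zero =>
      intro i
      exact ⟨1, ⟨S.one_mem, one_mul 1⟩, by rw [one_mul, mul_one, Nat.add_zero]⟩
    | succ d ih =>
      intro i
      obtain ⟨s, hs, hse⟩ := ih i
      obtain ⟨t, ht, hte⟩ := hexch (i + d)
      have hpq : e i * e (i + (d + 1)) = 0 := horth _ _ (by omega)
      have hqp : e (i + (d + 1)) * e i = 0 := horth _ _ (by omega)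
      have hkey : t * (s * e i * s) * t = e (i + (d + 1)) := by
        rw [hse]
        have : i + d + 1 = i + (d + 1) := by omega
        rw [← this, ← hte]
      exact sym_exchange_key S (he i) hs ht hpq hqp hkey
  intro i j
  rcases le_or_gt i j with hij | hij
  · obtain ⟨s, hs, hse⟩ := claim (j - i) i
    refine ⟨s, hs, ?_⟩
    rwa [Nat.add_sub_cancel' hij] at hse
  · obtain ⟨s, hs, hse⟩ := claim (i - j) j
    rw [Nat.add_sub_cancel' hij.le] at hse
    refine ⟨s, hs, ?_⟩
    rw [← hse]
    have s2 := hs.2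
    calc s * (s * e j * s) * s = (s * s) * e j * (s * s) := by noncomm_ring
      _ = e j := by rw [s2, one_mul, mul_one]
end

section
/- Let A be a synaptic algebra, s and t symmetries, f a projection with tsfst < f, f₁ := f, f_{n+1} := ts f_n st, and e_n := f_n − f_{n+1}. Then each e_n is a nonzero projection below f, the family (e_n) is pairwise orthogonal, and for all n, ts e_n st = e_{n+1}. -/
/-! Conjugation by a symmetry `s` preserves membership in `A`, the order, and projections,
and it is an involution, so it preserves strict inequalities as well. Hence `fₙ ↦ ts fₙ st`
turns `tsfst < f` into a strictly decreasing chain of projections `f₀ > f₁ > ⋯`. Consecutive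
differences of a decreasing chain of projections are projections, and `fₙ - fₙ₊₁ ≤ fₙ ≤ fₘ₊₁`
for `m < n` makes `eₙ` orthogonal to `eₘ = fₘ - fₘ₊₁`. -/


universe u

namespace Synaptic

variable {R : Type u} [Ring R] [PartialOrder R] {S : Synaptic R}

theorem sub_mem {a b : R} (ha : a ∈ S.A) (hb : b ∈ S.A) : b - a ∈ S.A := by
  rw [sub_eq_add_neg]
  exact S.add_mem hb (S.neg_mem ha)

theorem sub_nonneg_of_le (S : Synaptic R) {a b : R} (hab : a ≤ b) : 0 ≤ b - a := by
  simpa [sub_eq_add_neg] using S.add_le_add_right hab (-a)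

theorem le_of_sub_nonneg (S : Synaptic R) {a b : R} (hab : 0 ≤ b - a) : a ≤ b := by
  simpa using S.add_le_add_right hab a

namespace IsSym

variable {s : R} (hs : S.IsSym s)
include hs

theorem conj_mem {a : R} (ha : a ∈ S.A) : s * a * s ∈ S.A :=
  S.quad_mem hs.1 ha

theorem conj_conj (a : R) : s * (s * a * s) * s = a :=
  calc s * (s * a * s) * s = s * s * a * (s * s) := by noncomm_ring
    _ = a := by rw [hs.2, one_mul, mul_one]

theorem conj_injective : Function.Injective fun a : R => s * a * s := fun a b hab => by
  simpa only [hs.conj_conj] using congrArg (fun x => s * x * s) hab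

theorem conj_le {a b : R} (ha : a ∈ S.A) (hb : b ∈ S.A) (hab : a ≤ b) :
    s * a * s ≤ s * b * s := by
  have hconj : 0 ≤ s * (b - a) * s :=
    S.quad_nonneg hs.1 (sub_mem ha hb) (S.sub_nonneg_of_le hab)
  rw [mul_sub, sub_mul] at hconj
  exact S.le_of_sub_nonneg hconj

theorem conj_lt {a b : R} (ha : a ∈ S.A) (hb : b ∈ S.A) (hab : a < b) :
    s * a * s < s * b * s :=
  (hs.conj_le ha hb hab.le).lt_of_ne fun h => hab.ne (hs.conj_injective h)

theorem conj_isProj {p : R} (hp : S.IsProj p) : S.IsProj (s * p * s) := by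
  refine ⟨hs.conj_mem hp.1, ?_⟩
  calc s * p * s * (s * p * s) = s * (p * (s * s) * p) * s := by noncomm_ring
    _ = s * p * s := by rw [hs.2, mul_one, hp.2]

end IsSym

namespace IsProj

variable {p q : R}

theorem le_iff (hp : S.IsProj p) (hq : S.IsProj q) : p ≤ q ↔ p * q = p ∧ q * p = p :=
  S.proj_le_iff hp.1 hp.2 hq.1 hq.2

theorem sub_of_le (hp : S.IsProj p) (hq : S.IsProj q) (hpq : p ≤ q) : S.IsProj (q - p) := by
  obtain ⟨hpq₁, hpq₂⟩ := (hp.le_iff hq).mp hpq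
  refine ⟨sub_mem hp.1 hq.1, ?_⟩
  rw [sub_mul, mul_sub, mul_sub, hp.2, hq.2, hpq₁, hpq₂]
  abel

theorem sub_le (hp : S.IsProj p) (hq : S.IsProj q) (hpq : p ≤ q) : q - p ≤ q := by
  obtain ⟨hpq₁, hpq₂⟩ := (hp.le_iff hq).mp hpq
  refine ((hp.sub_of_le hq hpq).le_iff hq).mpr ⟨?_, ?_⟩
  · rw [sub_mul, hq.2, hpq₁]
  · rw [mul_sub, hq.2, hpq₂]

theorem sub_mul_eq_zero_of_le {x : R} (hx : S.IsProj x) (hp : S.IsProj p)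
    (hq : S.IsProj q) (hxp : x ≤ p) (hpq : p ≤ q) :
    (q - p) * x = 0 ∧ x * (q - p) = 0 := by
  obtain ⟨hxp₁, hxp₂⟩ := (hx.le_iff hp).mp hxp
  obtain ⟨hxq₁, hxq₂⟩ := (hx.le_iff hq).mp (hxp.trans hpq)
  constructor
  · rw [sub_mul, hxq₂, hxp₂, sub_self]
  · rw [mul_sub, hxq₁, hxp₁, sub_self]

end IsProj

theorem sub_succ_mul_sub_succ_eq_zero {g : ℕ → R} (hg : ∀ n, S.IsProj (g n))
    (hanti : Antitone g) {m n : ℕ} (hmn : m < n) :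
    (g m - g (m + 1)) * (g n - g (n + 1)) = 0 ∧ (g n - g (n + 1)) * (g m - g (m + 1)) = 0 := by
  have hdiff_le : g n - g (n + 1) ≤ g (m + 1) :=
    ((hg (n + 1)).sub_le (hg n) (hanti n.le_succ)).trans (hanti hmn)
  have hdiff := (hg (n + 1)).sub_of_le (hg n) (hanti n.le_succ)
  exact hdiff.sub_mul_eq_zero_of_le (hg (m + 1)) (hg m) hdiff_le (hanti m.le_succ)

end Synaptic

/-- With `s, t` symmetries, `f` a projection with `tsfst < f`, `f₁ := f`,
`fₙ₊₁ := ts fₙ st`, and `eₙ := fₙ − fₙ₊₁`: each `eₙ` is a nonzero projection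
below `f`, the family `(eₙ)` is pairwise orthogonal, and `ts eₙ st = eₙ₊₁`. -/
theorem difference_sequence_orthogonal {R : Type u} [Ring R] [PartialOrder R]
    (S : Synaptic R) (s t f : R) (hs : S.IsSym s) (ht : S.IsSym t)
    (hf : S.IsProj f) (hlt : t * s * f * s * t < f)
    (g : ℕ → R) (hg0 : g 0 = f) (hgs : ∀ n, g (n + 1) = t * s * g n * s * t)
    (e : ℕ → R) (he : ∀ n, e n = g n - g (n + 1)) :
    (∀ n, S.IsProj (e n) ∧ e n ≠ 0 ∧ e n ≤ f) ∧
    (∀ m n, m ≠ n → e m * e n = 0) ∧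
    (∀ n, t * s * e n * s * t = e (n + 1)) := by
  have hgs' : ∀ n, g (n + 1) = t * (s * g n * s) * t := fun n => by
    rw [hgs n]; noncomm_ring
  have hgP : ∀ n, S.IsProj (g n) := by
    intro n
    induction n with
    | zero => rwa [hg0]
    | succ n ih => rw [hgs']; exact ht.conj_isProj (hs.conj_isProj ih)
  have hanti : StrictAnti g := by
    refine strictAnti_nat_of_succ_lt fun n => ?_
    induction n with
    | zero => rwa [hgs, hg0]
    | succ n ih =>
      calc g (n + 2) = t * (s * g (n + 1) * s) * t := hgs' _
        _ < t * (s * g n * s) * t := ht.conj_lt (hs.conj_mem (hgP _).1) (hs.conj_mem (hgP _).1)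
            (hs.conj_lt (hgP _).1 (hgP _).1 ih)
        _ = g (n + 1) := (hgs' n).symm
  refine ⟨fun n => ⟨?_, ?_, ?_⟩, fun m n hmn => ?_, fun n => ?_⟩
  · rw [he]; exact (hgP _).sub_of_le (hgP n) (hanti n.lt_succ_self).le
  · rw [he]; exact sub_ne_zero.mpr (hanti n.lt_succ_self).ne'
  · rw [he, ← hg0]
    exact ((hgP _).sub_le (hgP n) (hanti n.lt_succ_self).le).trans (hanti.antitone n.zero_le)
  · simp only [he]
    rcases hmn.lt_or_gt with h | h
    · exact (Synaptic.sub_succ_mul_sub_succ_eq_zero hgP hanti.antitone h).1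
    · exact (Synaptic.sub_succ_mul_sub_succ_eq_zero hgP hanti.antitone h).2
  · rw [he, he, hgs (n + 1), hgs n]
    noncomm_ring
end

section
/- Let P be a centrally orthocomplete projection lattice of a synaptic algebra A, with central cover map γ. If projections p and q are exchanged by a symmetry s ∈ A (sps = q), then γp = γq. -/
universe u

namespace Synaptic

variable {R : Type u} [Ring R] [PartialOrder R] (S : Synaptic R)

variable {S}

theorem IsSym.conj_conj_s9 {s : R} (hs : S.IsSym s) (a : R) : s * (s * a * s) * s = a := by
  calc s * (s * a * s) * s = (s * s) * a * (s * s) := by noncomm_ring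
    _ = a := by rw [hs.2, one_mul, mul_one]

theorem Central.conj_mul_eq {c s a : R} (hc : S.Central c) (hs : s ∈ S.A) (ha : a * c = a) :
    s * a * s * c = s * a * s := by
  calc s * a * s * c = s * a * (c * s) := by rw [hc.2 s hs, mul_assoc]
    _ = s * (a * c) * s := by noncomm_ring
    _ = s * a * s := by rw [ha]

theorem IsCentralCover.le_of_conj {p s cp cq : R} (hs : S.IsSym s)
    (hcp : S.IsCentralCover p cp) (hcq : S.IsCentralCover (s * p * s) cq) : cq ≤ cp :=
  hcq.2.2 cp hcp.1 (hcp.1.2.conj_mul_eq hs.1 hcp.2.1)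

end Synaptic

theorem centralCover_of_exchanged_general {R : Type u} [Ring R] [PartialOrder R]
    (S : Synaptic R) (p q s cp cq : R)
    (hs : S.IsSym s)
    (hex : s * p * s = q)
    (hcp : S.IsCentralCover p cp) (hcq : S.IsCentralCover q cq) :
    cp = cq := by
  have hpq : s * q * s = p := hex ▸ hs.conj_conj_s9 p
  refine le_antisymm ?_ (hcp.le_of_conj hs (hex ▸ hcq))
  exact hcq.le_of_conj hs (hpq ▸ hcp)

/-- In a synaptic algebra with centrally orthocomplete projection lattice,
projections exchanged by a symmetry have equal central covers. -/
theorem centralCover_of_exchanged {R : Type u} [Ring R] [PartialOrder R]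
    (S : Synaptic R) (hco : S.CentOrthocomplete) (p q s cp cq : R)
    (hp : S.IsProj p) (hq : S.IsProj q) (hs : S.IsSym s)
    (hex : s * p * s = q)
    (hcp : S.IsCentralCover p cp) (hcq : S.IsCentralCover q cq) :
    cp = cq :=
  centralCover_of_exchanged_general S p q s cp cq hs hex hcp hcq
end

section
/- Let P be a centrally orthocomplete projection OML of a synaptic algebra, Q ⊆ P a TD set, and c a central projection. Then c ∈ γ(Q) if and only if Q has nonzero intersection with every nonzero direct summand of P[0,c], i.e., for every central projection d with cd ≠ 0 there exists 0 ≠ q ∈ Q with q ≤ cd. -/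
universe u

/-!
Forward: if `c = γ q`, then for a central `d` the projection `q d ∈ Q` lies under `c d`, and
`q d = 0` would force `γ q ≤ 1 - d`, i.e. `c d = 0`.

Backward, an exhaustion argument: by Zorn take a maximal family `F ⊆ Q ∩ P[0,c]` whose central
covers are pairwise orthogonal. It is centrally orthogonal, so it has a supremum `p`, which lies
in `Q` and satisfies `γ p ≤ c`. If `γ p ≠ c`, the summand `c (1 - γ p)` contains some `0 ≠ q ∈ Q`,
whose central cover is orthogonal to `γ p` and hence to every `γ x`, `x ∈ F`; then `F ∪ {q}`
contradicts maximality.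
-/

theorem Set.exists_maximal_pairwise_subset {α : Type*} (T : Set α) (r : α → α → Prop) :
    ∃ F, Maximal (fun F => F ⊆ T ∧ F.Pairwise r) F := by
  refine zorn_subset _ fun C hC hchain => ⟨⋃₀ C, ⟨?_, ?_⟩, fun _ => Set.subset_sUnion_of_mem⟩
  · exact Set.sUnion_subset fun F hF => (hC hF).1
  · exact (Set.pairwise_sUnion hchain.directedOn).mpr fun F hF => (hC hF).2

namespace Synaptic

variable {R : Type u} [Ring R] [PartialOrder R] {S : Synaptic R}

section Projections

variable {p q c d : R}

lemma le_of_mul_eq (hp : S.IsProj p) (hq : S.IsProj q) (h₁ : p * q = p) (h₂ : q * p = p) :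
    p ≤ q :=
  (S.proj_le_iff hp.1 hp.2 hq.1 hq.2).mpr ⟨h₁, h₂⟩

lemma mul_eq_left_of_le (hp : S.IsProj p) (hq : S.IsProj q) (h : p ≤ q) : p * q = p :=
  ((S.proj_le_iff hp.1 hp.2 hq.1 hq.2).mp h).1

lemma mul_eq_right_of_le (hp : S.IsProj p) (hq : S.IsProj q) (h : p ≤ q) : q * p = p :=
  ((S.proj_le_iff hp.1 hp.2 hq.1 hq.2).mp h).2

lemma le_of_mul_central_eq (hp : S.IsProj p) (hc : S.IsCentralProj c) (h : p * c = p) :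
    p ≤ c :=
  le_of_mul_eq hp hc.1 h (by rw [hc.2.2 p hp.1, h])

lemma isProj_mul_central (hp : S.IsProj p) (hd : S.IsCentralProj d) : S.IsProj (p * d) := by
  have hmem : p * d ∈ S.A := by
    have h := S.quad_mem hp.1 hd.2.1
    rwa [mul_assoc, hd.2.2 p hp.1, ← mul_assoc, hp.2] at h
  refine ⟨hmem, ?_⟩
  calc p * d * (p * d) = p * (d * p) * d := by noncomm_ring
    _ = p * p * (d * d) := by rw [hd.2.2 p hp.1]; noncomm_ring
    _ = p * d := by rw [hp.2, hd.1.2]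

lemma isCentralProj_one_sub (hd : S.IsCentralProj d) : S.IsCentralProj (1 - d) := by
  have hmem : (1 : R) - d ∈ S.A := by
    rw [sub_eq_add_neg]; exact S.add_mem S.one_mem (S.neg_mem hd.1.1)
  refine ⟨⟨hmem, ?_⟩, hmem, fun a ha => ?_⟩
  · calc (1 - d) * (1 - d) = 1 - d - d + d * d := by noncomm_ring
      _ = 1 - d := by rw [hd.1.2]; abel
  · rw [sub_mul, mul_sub, one_mul, mul_one, hd.2.2 a ha]

lemma mul_central_le_mul_central (hp : S.IsProj p) (hq : S.IsProj q) (hd : S.IsCentralProj d)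
    (h : p ≤ q) : p * d ≤ q * d := by
  refine le_of_mul_eq (isProj_mul_central hp hd) (isProj_mul_central hq hd) ?_ ?_
  · calc p * d * (q * d) = p * (d * q) * d := by noncomm_ring
      _ = p * q * (d * d) := by rw [hd.2.2 q hq.1]; noncomm_ring
      _ = p * d := by rw [mul_eq_left_of_le hp hq h, hd.1.2]
  · calc q * d * (p * d) = q * (d * p) * d := by noncomm_ring
      _ = q * p * (d * d) := by rw [hd.2.2 p hp.1]; noncomm_ring
      _ = p * d := by rw [mul_eq_right_of_le hp hq h, hd.1.2]

lemma mul_central_le (hp : S.IsProj p) (hd : S.IsCentralProj d) : p * d ≤ p :=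
  le_of_mul_eq (isProj_mul_central hp hd) hp
    (by rw [mul_assoc, hd.2.2 p hp.1, ← mul_assoc, hp.2]) (by rw [← mul_assoc, hp.2])

lemma mul_eq_zero_of_le_one_sub (hp : S.IsProj p) (hd : S.IsCentralProj d) (h : p ≤ 1 - d) :
    p * d = 0 := by
  have := mul_eq_left_of_le hp (isCentralProj_one_sub hd).1 h
  rwa [mul_sub, mul_one, sub_eq_self] at this

end Projections

namespace IsCentralCover

variable {p q c c' d : R}

lemma le (h : S.IsCentralCover p c) (hp : S.IsProj p) : p ≤ c :=
  le_of_mul_central_eq hp h.1 h.2.1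

lemma mono (h : S.IsCentralCover p c) (h' : S.IsCentralCover q c') (hp : S.IsProj p)
    (hq : S.IsProj q) (hpq : p ≤ q) : c ≤ c' := by
  refine h.2.2 c' h'.1 ?_
  calc p * c' = p * q * c' := by rw [mul_eq_left_of_le hp hq hpq]
    _ = p := by rw [mul_assoc, h'.2.1, mul_eq_left_of_le hp hq hpq]

lemma eq_zero (h : S.IsCentralCover p c) (hc : c = 0) : p = 0 := by
  rw [← h.2.1, hc, mul_zero]

lemma mul_eq_zero (h : S.IsCentralCover p c) (hd : S.IsCentralProj d) (hpd : p * d = 0) :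
    c * d = 0 := by
  refine mul_eq_zero_of_le_one_sub h.1.1 hd (h.2.2 _ (isCentralProj_one_sub hd) ?_)
  rw [mul_sub, mul_one, hpd, sub_zero]

end IsCentralCover

section Exhaustion

variable {γ : R → R}

lemma centOrthSet_of_pairwise (hγ : ∀ r : R, S.IsProj r → S.IsCentralCover r (γ r))
    {F : Set R} (hF : ∀ x ∈ F, S.IsProj x) (horth : F.Pairwise fun x y => γ x * γ y = 0) :
    S.CentOrthSet F :=
  ⟨hF, γ, fun x hx => ⟨(hγ x (hF x hx)).1, (hγ x (hF x hx)).le (hF x hx)⟩, horth⟩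

lemma centralCover_mul_ne_zero_of_maximal
    (hγ : ∀ r : R, S.IsProj r → S.IsCentralCover r (γ r)) {T F : Set R} (hT : ∀ x ∈ T, S.IsProj x)
    (hF : Maximal (fun F => F ⊆ T ∧ F.Pairwise fun x y => γ x * γ y = 0) F)
    {p : R} (hp : S.IsSupProj F p) {q : R} (hqT : q ∈ T) (hq0 : q ≠ 0) :
    γ q * γ p ≠ 0 := by
  intro horth
  have hq := hT q hqT
  have hγq := (hγ q hq).1
  have hqF : q ∉ F := fun hqF => hq0 <| (hγ q hq).eq_zero <| by
    rw [← horth, mul_eq_left_of_le hγq.1 (hγ p hp.1).1.1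
      ((hγ q hq).mono (hγ p hp.1) hq hp.1 (hp.2.1 q hqF))]
  have hkill : ∀ x ∈ F, γ q * γ x = 0 := fun x hxF => by
    have hx := hT x (hF.1.1 hxF)
    rw [← mul_eq_right_of_le (hγ x hx).1.1 (hγ p hp.1).1.1
      ((hγ x hx).mono (hγ p hp.1) hx hp.1 (hp.2.1 x hxF)), ← mul_assoc, horth, zero_mul]
  have hins : insert q F ⊆ T ∧ (insert q F).Pairwise fun x y => γ x * γ y = 0 := by
    refine ⟨Set.insert_subset hqT hF.1.1, Set.pairwise_insert.mpr ⟨hF.1.2, fun x hx _ => ?_⟩⟩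
    have hγx := (hγ x (hT x (hF.1.1 hx))).1
    exact ⟨hkill x hx, by rw [← hγq.2.2 _ hγx.1.1, hkill x hx]⟩
  exact hqF (hF.2 hins (Set.subset_insert q F) (Set.mem_insert q F))

end Exhaustion

end Synaptic

/-- For a TD set `Q` and a central projection `c`: `c ∈ γ(Q)` iff `Q` has
nonzero intersection with every nonzero direct summand of `P[0,c]`. -/
theorem central_mem_gammaQ_iff {R : Type u} [Ring R] [PartialOrder R]
    (S : Synaptic R) (hco : S.CentOrthocomplete)
    (γ : R → R) (hγ : ∀ r : R, S.IsProj r → S.IsCentralCover r (γ r))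
    (Q : Set R) (hQ : S.TD Q) (c : R) (hc : S.IsCentralProj c) :
    (∃ q ∈ Q, γ q = c) ↔
      (∀ d : R, S.IsCentralProj d → c * d ≠ 0 →
        ∃ q ∈ Q, q ≠ 0 ∧ q ≤ c * d) := by
  open Synaptic in
  obtain ⟨hQproj, hQsup, hQmul⟩ := hQ
  constructor
  · rintro ⟨q, hqQ, rfl⟩ d hd hqd
    have hq := hQproj q hqQ
    refine ⟨q * d, hQmul q hqQ d hd, fun h0 => hqd ((hγ q hq).mul_eq_zero hd h0), ?_⟩
    exact mul_central_le_mul_central hq (hγ q hq).1.1 hd ((hγ q hq).le hq)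
  · intro hmeet
    set T := {x ∈ Q | x ≤ c}
    have hT : ∀ x ∈ T, S.IsProj x := fun x hx => hQproj x hx.1
    obtain ⟨F, hF⟩ := Set.exists_maximal_pairwise_subset T fun x y => γ x * γ y = 0
    have hcent := centOrthSet_of_pairwise hγ (fun x hx => hT x (hF.1.1 hx)) hF.1.2
    obtain ⟨p, hp⟩ := hco F hcent
    have hpc : p ≤ c := hp.2.2 c hc.1 fun x hx => (hF.1.1 hx).2
    have hγp := (hγ p hp.1).1
    have hγpc : γ p ≤ c := (hγ p hp.1).2.2 c hc (mul_eq_left_of_le hp.1 hc.1 hpc)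
    refine ⟨p, hQsup F (fun x hx => (hF.1.1 hx).1) hcent p hp, ?_⟩
    by_contra hne
    have hcomp := isCentralProj_one_sub hγp
    obtain ⟨q, hqQ, hq0, hqle⟩ := hmeet (1 - γ p) hcomp <| by
      rwa [mul_sub, mul_one, mul_eq_right_of_le hγp.1 hc.1 hγpc, sub_ne_zero, ne_comm]
    have hq := hQproj q hqQ
    have hqc : q ≤ c := hqle.trans (mul_central_le hc.1 hcomp)
    have hqγp : q * γ p = 0 := by
      refine mul_eq_zero_of_le_one_sub hq hγp (hqle.trans ?_)
      rw [hc.2.2 _ hcomp.1.1]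
      exact mul_central_le hcomp.1 hc
    exact centralCover_mul_ne_zero_of_maximal hγ hT hF hp ⟨hqQ, hqc⟩ hq0
      ((hγ q hq).mul_eq_zero hγp hqγp)
end
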